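/- arXiv:1911.05147 — 5 statements merged into one kernel-verified Lean document; each statement's English description precedes it below -/
import Mathlib

section
/- No mid-sized cuts implies a near-spanning component: let G be a (finite simple) graph on n vertices and let x be a positive integer with x ≤ ⌊n/3⌋. If G has no cut S with x ≤ |S| ≤ n−x, then the largest connected component of G has more than n−x vertices. -/
open Finset

namespace KOut

/-- A cut: a nonempty proper subset of the vertices with no edge to its complement. -/
def IsCut {V : Type*} [Fintype V] (G : SimpleGraph V) (S : Finset V) : Prop :=
  S.Nonempty ∧ S ≠ Finset.univ ∧ ∀ i ∈ S, ∀ j ∉ S, ¬ G.Adj i j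

/-- The number of vertices in the largest connected component. -/
noncomputable def maxCompSize {V : Type*} [Fintype V] (G : SimpleGraph V) : ℕ :=
  Finset.univ.sup fun v : V => Nat.card {u : V // G.Reachable u v}

private theorem walk_mem {V : Type*} [Fintype V] {G : SimpleGraph V} {S : Finset V}
    (hS : ∀ i ∈ S, ∀ j ∉ S, ¬ G.Adj i j) :
    ∀ {v u : V}, G.Walk v u → v ∈ S → u ∈ S
  | _, _, SimpleGraph.Walk.nil, hv => hv
  | _, _, SimpleGraph.Walk.cons h p, hv =>
      walk_mem hS p (by by_contra hb; exact hS _ hv _ hb h)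

/-- No mid-sized cuts implies a near-spanning component: if a finite
simple graph `G` on `n` vertices has no cut `S` with `x ≤ |S| ≤ n - x`, where
`1 ≤ x ≤ ⌊n/3⌋`, then its largest connected component has more than `n - x`
vertices. -/
theorem no_midsize_cut_implies_large_component
    {V : Type*} [Fintype V] (G : SimpleGraph V)
    (x : ℕ) (hx : 0 < x) (hx3 : x ≤ Fintype.card V / 3)
    (hcut : ∀ S : Finset V, IsCut G S → ¬ (x ≤ S.card ∧ S.card ≤ Fintype.card V - x)) :
    Fintype.card V - x < maxCompSize G := by
  classical
  by_contra hlt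
  push_neg at hlt
  set n := Fintype.card V with hn_def
  have hn : 3 * x ≤ n := by
    have := (Nat.le_div_iff_mul_le (by norm_num : 0 < 3)).mp hx3
    omega
  -- the component of v as a finset
  set comp : V → Finset V := fun v => Finset.univ.filter (fun u => G.Reachable u v) with hcomp
  have hcomp_card : ∀ v, (comp v).card = Nat.card {u : V // G.Reachable u v} := by
    intro v
    rw [Nat.card_eq_fintype_card, Fintype.card_subtype]
  have hcomp_closed : ∀ v, ∀ i ∈ comp v, ∀ j ∉ comp v, ¬ G.Adj i j := by
    intro v i hi j hj hadj
    apply hj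
    simp only [hcomp, Finset.mem_filter, Finset.mem_univ, true_and] at hi ⊢
    exact hadj.symm.reachable.trans hi
  have hcomp_mem : ∀ v, v ∈ comp v := by
    intro v
    simp only [hcomp, Finset.mem_filter, Finset.mem_univ, true_and]
    exact SimpleGraph.Reachable.refl v
  -- each component has size ≤ n - x
  have hcomp_le : ∀ v, (comp v).card ≤ n - x := by
    intro v
    calc (comp v).card = Nat.card {u : V // G.Reachable u v} := hcomp_card v
      _ ≤ maxCompSize G := Finset.le_sup (f := fun v : V => Nat.card {u : V // G.Reachable u v}) (Finset.mem_univ v)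
      _ ≤ n - x := hlt
  -- each component has size < x
  have hcomp_lt : ∀ v, (comp v).card < x := by
    intro v
    by_contra h
    push_neg at h
    refine hcut (comp v) ⟨⟨v, hcomp_mem v⟩, ?_, hcomp_closed v⟩ ⟨h, hcomp_le v⟩
    intro he
    have := hcomp_le v
    rw [he, Finset.card_univ] at this
    omega
  -- minimal closed set of size ≥ x
  have hexu : ∃ S : Finset V, (∀ i ∈ S, ∀ j ∉ S, ¬ G.Adj i j) ∧ x ≤ S.card := by
    refine ⟨Finset.univ, by simp, ?_⟩
    rw [Finset.card_univ]; omega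
  have hex : ∃ k, ∃ S : Finset V, (∀ i ∈ S, ∀ j ∉ S, ¬ G.Adj i j) ∧ x ≤ S.card ∧ S.card = k := by
    obtain ⟨S, h1, h2⟩ := hexu
    exact ⟨S.card, S, h1, h2, rfl⟩
  obtain ⟨S, hScl, hSx, hSk⟩ := Nat.find_spec hex
  have hSmin : ∀ T : Finset V, (∀ i ∈ T, ∀ j ∉ T, ¬ G.Adj i j) → x ≤ T.card →
      S.card ≤ T.card := by
    intro T h1 h2
    rw [hSk]
    exact Nat.find_le ⟨T, h1, h2, rfl⟩
  -- S is not a cut, so |S| > n - x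
  have hSbig : n - x < S.card := by
    by_contra h
    push_neg at h
    refine hcut S ⟨Finset.card_pos.mp (lt_of_lt_of_le hx hSx), ?_, hScl⟩ ⟨hSx, h⟩
    intro he
    rw [he, Finset.card_univ] at h
    omega
  -- remove a component from S
  obtain ⟨v, hv⟩ := Finset.card_pos.mp (lt_of_lt_of_le hx hSx)
  have hsub : comp v ⊆ S := by
    intro u hu
    simp only [hcomp, Finset.mem_filter, Finset.mem_univ, true_and] at hu
    obtain ⟨p⟩ := hu
    exact walk_mem hScl p.reverse hv
  set T := S \ comp v with hT
  have hTcl : ∀ i ∈ T, ∀ j ∉ T, ¬ G.Adj i j := by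
    intro i hi j hj hadj
    rw [hT, Finset.mem_sdiff] at hi hj
    push_neg at hj
    rcases Classical.em (j ∈ S) with hjS | hjS
    · exact hi.2 ((hcomp_closed v j (hj hjS) i hi.2 hadj.symm).elim)
    · exact hScl i hi.1 j hjS hadj
  have hTcard : T.card = S.card - (comp v).card := Finset.card_sdiff_of_subset hsub
  have hvcomp : 1 ≤ (comp v).card := Finset.card_pos.mpr ⟨v, hcomp_mem v⟩
  have hScard_le : S.card ≤ n := by
    rw [hn_def]; exact Finset.card_le_univ S
  have hTx : x ≤ T.card := by
    have h1 := hcomp_lt v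
    omega
  have := hSmin T hTcl hTx
  have h1 := hcomp_lt v
  omega

end KOut
end

section
/- Structural consequence of vertex connectivity ℓ with minimum degree exceeding ℓ: let G be a (finite simple) graph on a vertex set N of size n, let ℓ ≥ 0 be an integer, and suppose the minimum degree of G is strictly greater than ℓ and the vertex connectivity of G equals ℓ (some set of ℓ vertices disconnects G and no smaller set does). Then there exist disjoint sets U, T ⊆ N with |U| = ℓ and 2 ≤ |T| ≤ ⌊(n−ℓ)/2⌋ such that: (i) the subgraph of G induced on T is connected, (ii) every vertex of U has a neighbor in T, and (iii) there is no edge of G between T and N∖(U∪T). -/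
open Finset

namespace KOut

private lemma walk_ind {W : Type*} {H : SimpleGraph W} (P : W → Prop)
    (hP : ∀ a b, P a → H.Adj a b → P b) :
    ∀ {a b : W}, H.Walk a b → P a → P b := by
  intro a b p
  induction p with
  | nil => exact id
  | cons h q ih => intro ha; exact ih (hP _ _ ha h)

private lemma aux {V : Type*} [Fintype V] (G : SimpleGraph V) [DecidableRel G.Adj]
    (ℓ : ℕ) (hδ : ℓ < G.minDegree)
    (S : Finset V) (hScard : S.card = ℓ)
    (hmin : ∀ S' : Finset V, S'.card < ℓ → (G.induce ((↑S' : Set V)ᶜ)).Connected)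
    (x y : ↥((↑S : Set V)ᶜ))
    (hxy : ¬ (G.induce ((↑S : Set V)ᶜ)).Reachable x y)
    (hle : {w | (G.induce ((↑S : Set V)ᶜ)).Reachable x w}.ncard ≤
           {w | (G.induce ((↑S : Set V)ᶜ)).Reachable y w}.ncard) :
    ∃ U T : Finset V, Disjoint U T ∧ U.card = ℓ ∧ 2 ≤ T.card ∧
      T.card ≤ (Fintype.card V - ℓ) / 2 ∧
      (G.induce (↑T : Set V)).Connected ∧
      (∀ u ∈ U, ∃ t ∈ T, G.Adj u t) ∧
      (∀ i ∈ T, ∀ j : V, j ∉ U → j ∉ T → ¬ G.Adj i j) := by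
  classical
  have hadj : ∀ a b : ↥((↑S : Set V)ᶜ),
      (G.induce ((↑S : Set V)ᶜ)).Adj a b ↔ G.Adj a.val b.val := fun a b => Iff.rfl
  -- every vertex outside S has a neighbor outside S
  have hnbr : ∀ w : ↥((↑S : Set V)ᶜ), ∃ z : ↥((↑S : Set V)ᶜ),
      (G.induce ((↑S : Set V)ᶜ)).Adj w z := by
    intro w
    by_contra h
    push_neg at h
    have hsub : G.neighborFinset w.val ⊆ S := by
      intro z hz
      by_contra hzS
      exact h ⟨z, by simpa using hzS⟩
        ((hadj _ _).mpr ((SimpleGraph.mem_neighborFinset _ _ _).mp hz))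
    have hdeg : ℓ < G.degree w.val := hδ.trans_le (G.minDegree_le_degree _)
    have : G.degree w.val ≤ ℓ := by
      rw [← hScard, ← SimpleGraph.card_neighborFinset_eq_degree]
      exact Finset.card_le_card hsub
    omega
  set Cx : Set ↥((↑S : Set V)ᶜ) := {w | (G.induce ((↑S : Set V)ᶜ)).Reachable x w} with hCx
  set Cy : Set ↥((↑S : Set V)ᶜ) := {w | (G.induce ((↑S : Set V)ᶜ)).Reachable y w} with hCy
  set Tset : Set V := Subtype.val '' Cx with hTset
  set T : Finset V := (Set.toFinite Tset).toFinset with hT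
  have hmemT : ∀ v : V, v ∈ T ↔ v ∈ Tset := fun v => Set.Finite.mem_toFinset _
  have hcoeT : (↑T : Set V) = Tset := Set.Finite.coe_toFinset _
  have hTs : ∀ v ∈ Tset, v ∉ S := by
    rintro v ⟨w, _, rfl⟩; exact w.property
  have hxT : x.val ∈ Tset := ⟨x, SimpleGraph.Reachable.refl _, rfl⟩
  -- separation property
  have hsep : ∀ v ∈ Tset, ∀ j : V, j ∉ S → j ∉ Tset → ¬ G.Adj v j := by
    rintro v ⟨w, hw, rfl⟩ j hjS hjT hadjvj
    have hj : j ∈ ((↑S : Set V)ᶜ) := by simpa using hjS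
    exact hjT ⟨⟨j, hj⟩, hw.trans ((hadj w ⟨j, hj⟩).mpr hadjvj).reachable, rfl⟩
  -- cardinalities
  have hcardT : T.card = Cx.ncard := by
    rw [hT, ← Set.ncard_eq_toFinset_card Tset (Set.toFinite Tset), hTset,
      Set.ncard_image_of_injective _ Subtype.val_injective]
  have hTwo : 2 ≤ T.card := by
    obtain ⟨z, hz⟩ := hnbr x
    have hzC : z ∈ Cx := hz.reachable
    have : (1 : ℕ) < T.card := Finset.one_lt_card.mpr
      ⟨x.val, (hmemT _).mpr hxT, z.val, (hmemT _).mpr ⟨z, hzC, rfl⟩,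
        fun hEq => (hz.ne (Subtype.ext hEq)).elim⟩
    omega
  have hdisjCxCy : Disjoint Cx Cy := by
    rw [Set.disjoint_left]
    intro w hwx hwy
    exact hxy (hwx.trans hwy.symm)
  have hhalf : T.card ≤ (Fintype.card V - ℓ) / 2 := by
    have h1 : Cx.ncard + Cy.ncard = (Cx ∪ Cy).ncard :=
      (Set.ncard_union_eq hdisjCxCy).symm
    have h2 : (Cx ∪ Cy).ncard ≤ (Set.univ : Set ↥((↑S : Set V)ᶜ)).ncard :=
      Set.ncard_le_ncard (Set.subset_univ _) (Set.toFinite _)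
    have h3 : (Set.univ : Set ↥((↑S : Set V)ᶜ)).ncard = ((↑S : Set V)ᶜ).ncard := by
      rw [Set.ncard_univ, Nat.card_coe_set_eq]
    have h4 := Set.ncard_add_ncard_compl (↑S : Set V)
    have h6 : Nat.card V = Fintype.card V := Nat.card_eq_fintype_card
    have h5 : (↑S : Set V).ncard = ℓ := by rw [Set.ncard_coe_finset, hScard]
    rw [Nat.le_div_iff_mul_le two_pos]
    omega
  -- connectivity of the induced graph on T
  have key : ∀ {a b : ↥((↑S : Set V)ᶜ)} (p : (G.induce ((↑S : Set V)ᶜ)).Walk a b)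
      (ha : (G.induce ((↑S : Set V)ᶜ)).Reachable x a),
      (G.induce Tset).Reachable ⟨a.val, ⟨a, ha, rfl⟩⟩ ⟨b.val, ⟨b, ha.trans ⟨p⟩, rfl⟩⟩ := by
    intro a b p
    induction p with
    | nil => intro ha; exact SimpleGraph.Reachable.refl _
    | @cons u v w h q ih =>
      intro ha
      have hv : (G.induce ((↑S : Set V)ᶜ)).Reachable x v := ha.trans h.reachable
      have hadj' : (G.induce Tset).Adj ⟨u.val, ⟨u, ha, rfl⟩⟩ ⟨v.val, ⟨v, hv, rfl⟩⟩ :=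
        (hadj u v).mp h
      exact hadj'.reachable.trans (ih hv)
  have hconnT : (G.induce (↑T : Set V)).Connected := by
    rw [hcoeT, SimpleGraph.connected_iff]
    refine ⟨?_, ⟨⟨x.val, hxT⟩⟩⟩
    rintro ⟨a, ha⟩ ⟨b, hb⟩
    obtain ⟨wa, hwa, rfl⟩ := ha
    obtain ⟨wb, hwb, rfl⟩ := hb
    obtain ⟨pa⟩ := hwa
    obtain ⟨pb⟩ := hwb
    exact (key pa (SimpleGraph.Reachable.refl _)).symm.trans
      (key pb (SimpleGraph.Reachable.refl _))
  -- every vertex of S has a neighbor in T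
  have hUadj : ∀ u ∈ S, ∃ t ∈ T, G.Adj u t := by
    intro u huS
    by_contra hcon
    push_neg at hcon
    have hℓpos : 0 < ℓ := hScard ▸ Finset.card_pos.mpr ⟨u, huS⟩
    have hcard : (S.erase u).card < ℓ := by
      rw [Finset.card_erase_of_mem huS, hScard]; omega
    have hconn := hmin _ hcard
    have hx' : x.val ∈ ((↑(S.erase u) : Set V)ᶜ) := by
      have hxS : x.val ∉ S := x.property
      simp only [Set.mem_compl_iff, Finset.mem_coe]
      intro hmem
      exact hxS (Finset.mem_of_mem_erase hmem)
    have hu' : u ∈ ((↑(S.erase u) : Set V)ᶜ) := by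
      simp [Finset.notMem_erase]
    obtain ⟨p⟩ := hconn.preconnected ⟨x.val, hx'⟩ ⟨u, hu'⟩
    have huT : u ∈ Tset := by
      refine walk_ind (H := G.induce ((↑(S.erase u) : Set V)ᶜ))
        (fun a => a.val ∈ Tset) ?_ p hxT
      rintro a b haT hab
      by_contra hbT
      have hGab : G.Adj a.val b.val := hab
      have hbS' : b.val ∉ S.erase u := b.property
      by_cases hbS : b.val ∈ S
      · have hbu : b.val = u := by
          by_contra hne
          exact hbS' (Finset.mem_erase.mpr ⟨hne, hbS⟩)
        exact hcon a.val ((hmemT _).mpr haT) (by simpa [hbu] using hGab.symm)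
      · exact hsep a.val haT b.val hbS hbT hGab
    exact hTs u huT huS
  refine ⟨S, T, ?_, hScard, hTwo, hhalf, hconnT, hUadj, ?_⟩
  · rw [Finset.disjoint_left]
    intro a haS haT
    exact hTs a ((hmemT _).mp haT) haS
  · intro i hiT j hjU hjT hGij
    exact hsep i ((hmemT _).mp hiT) j hjU (fun hj => hjT ((hmemT _).mpr hj)) hGij

/-- Structural consequence of vertex connectivity `ℓ` with minimum
degree exceeding `ℓ`: if the minimum degree of a finite simple graph `G` on `n`
vertices is strictly greater than `ℓ`, some set of `ℓ` vertices disconnects `G`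
(deleting it leaves a non-connected induced subgraph), and no set of fewer than `ℓ`
vertices does, then there are disjoint vertex sets `U, T` with `|U| = ℓ` and
`2 ≤ |T| ≤ ⌊(n-ℓ)/2⌋` such that the subgraph induced on `T` is connected, every vertex
of `U` has a neighbor in `T`, and there is no edge between `T` and the rest of the
graph. -/
theorem structure_of_minimum_vertex_cut
    {V : Type*} [Fintype V] (G : SimpleGraph V) [DecidableRel G.Adj]
    (ℓ : ℕ) (hδ : ℓ < G.minDegree)
    (hdisc : ∃ S : Finset V, S.card = ℓ ∧ ¬ (G.induce ((↑S : Set V)ᶜ)).Connected)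
    (hmin : ∀ S : Finset V, S.card < ℓ → (G.induce ((↑S : Set V)ᶜ)).Connected) :
    ∃ U T : Finset V, Disjoint U T ∧ U.card = ℓ ∧ 2 ≤ T.card ∧
      T.card ≤ (Fintype.card V - ℓ) / 2 ∧
      (G.induce (↑T : Set V)).Connected ∧
      (∀ u ∈ U, ∃ t ∈ T, G.Adj u t) ∧
      (∀ i ∈ T, ∀ j : V, j ∉ U → j ∉ T → ¬ G.Adj i j) := by
  classical
  obtain ⟨S, hScard, hSdisc⟩ := hdisc
  have hne : Nonempty V := by
    by_contra h
    rw [not_nonempty_iff] at h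
    have : G.minDegree = 0 := by
      simp [SimpleGraph.minDegree, Finset.univ_eq_empty]
    omega
  have hcV : ℓ + 2 ≤ Fintype.card V := by
    obtain ⟨v⟩ := hne
    have h1 : ℓ < G.degree v := hδ.trans_le (G.minDegree_le_degree _)
    have h2 : G.degree v < Fintype.card V := G.degree_lt_card_verts v
    omega
  have hvex : ∃ v : V, v ∉ S := by
    by_contra h
    push_neg at h
    have : S = Finset.univ := Finset.eq_univ_of_forall h
    rw [this, Finset.card_univ] at hScard
    omega
  obtain ⟨v, hv⟩ := hvex
  have hWne : Nonempty ↥((↑S : Set V)ᶜ) := ⟨⟨v, by simpa using hv⟩⟩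
  have hnp : ¬ (G.induce ((↑S : Set V)ᶜ)).Preconnected := by
    intro hp
    exact hSdisc ((SimpleGraph.connected_iff _).mpr ⟨hp, hWne⟩)
  rw [SimpleGraph.Preconnected] at hnp
  push_neg at hnp
  obtain ⟨x, y, hxy⟩ := hnp
  rcases le_total
      {w | (G.induce ((↑S : Set V)ᶜ)).Reachable x w}.ncard
      {w | (G.induce ((↑S : Set V)ᶜ)).Reachable y w}.ncard with h | h
  · exact aux G ℓ hδ S hScard hmin x y hxy h
  · exact aux G ℓ hδ S hScard hmin y x (fun r => hxy r.symm) h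

end KOut
end

section
/- Conditioning on all type-2 choices in T increases the probability of B∩C: fix 0<μ<1, n ≥ 2, 2 ≤ K_n < n, and integers ℓ ≥ 0 and r with 2 ≤ r ≤ n−ℓ−1. In H(n;μ,K_n), with U = {v_1,…,v_ℓ} and T = {v_{ℓ+1},…,v_{ℓ+r}}, let B be the event that every node of U is adjacent to some node of T, C the event that the induced subgraph on T is connected, and X_2 the event that every node in T has type 2. Then P[B ∩ C] ≤ P[B ∩ C | X_2]. -/
/-!
Given the type vector, the event `B ∩ C` is an increasing function of the independent selection
sets. A uniform `K`-subset stochastically dominates a single uniform choice (a uniform singleton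
is a uniformly chosen element of a uniform `K`-subset), so the conditional probability of `B ∩ C`
given the types can only grow when a node is switched from type 1 to type 2. Switching all of `T`
to type 2 therefore bounds `P[B ∩ C]` by the average, over the types outside `T`, of the
conditional probability with `T` of type 2; since the types in `T` are independent of the others,
that average is `P[B ∩ C | X_2]`.
-/

open Finset Filter Asymptotics

namespace KOut

/-- A configuration: for each node, its type (`true` = type-1, `false` = type-2)
and the set of nodes it selects. -/
abbrev Config (n : ℕ) := (Fin n → Bool) × (Fin n → Finset (Fin n))

/-- Probability density of a configuration in the inhomogeneous random K-out graph
model `H(n; μ, K)`: each node is independently type-1 with probability `μ` (type-2 with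
probability `1-μ`), and, given its type, its selection set is uniform among the subsets
of the other `n-1` nodes of size `1` (type-1) resp. `K` (type-2). -/
noncomputable def density (n : ℕ) (μ : ℝ) (K : ℕ) (ω : Config n) : ℝ :=
  ∏ i : Fin n,
    ((if ω.1 i then μ else 1 - μ) *
      (if i ∉ ω.2 i ∧ (ω.2 i).card = (if ω.1 i then 1 else K)
       then ((n - 1).choose (if ω.1 i then 1 else K) : ℝ)⁻¹ else 0))

/-- Probability of an event in `H(n; μ, K)`. -/
noncomputable def prob (n : ℕ) (μ : ℝ) (K : ℕ) (E : Set (Config n)) : ℝ :=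
  ∑ ω : Config n, Set.indicator E (density n μ K) ω

/-- The (undirected) graph associated with a configuration: an edge joins two distinct
nodes iff at least one of them selects the other. -/
def graph {n : ℕ} (ω : Config n) : SimpleGraph (Fin n) where
  Adj i j := i ≠ j ∧ (j ∈ ω.2 i ∨ i ∈ ω.2 j)
  symm := ⟨fun _ _ h => ⟨h.1.symm, h.2.symm⟩⟩
  loopless := ⟨fun _ h => h.1 rfl⟩

instance {n : ℕ} (ω : Config n) : DecidableRel (graph ω).Adj :=
  fun i j => inferInstanceAs (Decidable (i ≠ j ∧ (j ∈ ω.2 i ∨ i ∈ ω.2 j)))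

/-- The mean number of selections `⟨K_n⟩ = μ + (1-μ) K_n`. -/
noncomputable def avgK (μ : ℝ) (K : ℕ) : ℝ := μ + (1 - μ) * K

/-- Conditional expectation of `X` given the event `A` in `H(n;μ,K)`. -/
noncomputable def expCond (n : ℕ) (μ : ℝ) (K : ℕ) (A : Set (Config n))
    (X : Config n → ℝ) : ℝ :=
  (∑ ω : Config n, Set.indicator A (fun ω => X ω * density n μ K ω) ω) / prob n μ K A

/-- Conditional probability of `E` given the event `A` in `H(n;μ,K)`. -/
noncomputable def cprob (n : ℕ) (μ : ℝ) (K : ℕ) (E A : Set (Config n)) : ℝ :=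
  prob n μ K (E ∩ A) / prob n μ K A

/-- `B`: the event that every node of `U = {v_1,…,v_ℓ}` is adjacent to some node of
`T = {v_{ℓ+1},…,v_{ℓ+r}}`. -/
def eventB (n ℓ r : ℕ) : Set (Config n) :=
  {ω | ∀ i : Fin n, (i : ℕ) < ℓ →
    ∃ j : Fin n, ℓ ≤ (j : ℕ) ∧ (j : ℕ) < ℓ + r ∧ (graph ω).Adj i j}

/-- `C`: the event that the subgraph induced on `T = {v_{ℓ+1},…,v_{ℓ+r}}` is
connected. -/
def eventC (n ℓ r : ℕ) : Set (Config n) :=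
  {ω | ((graph ω).induce {v : Fin n | ℓ ≤ (v : ℕ) ∧ (v : ℕ) < ℓ + r}).Connected}

/-- `X_t`: the event that every node in `T = {v_{ℓ+1},…,v_{ℓ+r}}` has type `t`
(`true` = type-1, `false` = type-2). -/
def eventX (n ℓ r : ℕ) (t : Bool) : Set (Config n) :=
  {ω | ∀ j : Fin n, ℓ ≤ (j : ℕ) → (j : ℕ) < ℓ + r → ω.1 j = t}

/-- The value `K_t`, with `K_1 = 1` (type-1, `t = true`) and `K_2 = K` (type-2,
`t = false`). -/
def Ktype (K : ℕ) (t : Bool) : ℕ := if t then 1 else K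

lemma sum_powersetCard_sum {α : Type*} [DecidableEq α] (s : Finset α) {k : ℕ} (hk : 1 ≤ k)
    (f : α → ℝ) :
    ∑ S ∈ s.powersetCard k, ∑ x ∈ S, f x = (#s - 1).choose (k - 1) * ∑ x ∈ s, f x := by
  have hinner : ∀ S ∈ s.powersetCard k, ∑ x ∈ S, f x = ∑ x ∈ s, if x ∈ S then f x else 0 :=
    fun S hS => by rw [sum_ite_mem, inter_eq_right.2 (mem_powersetCard.1 hS).1]
  rw [sum_congr rfl hinner, sum_comm, mul_sum]
  refine sum_congr rfl fun x hx => ?_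
  have hcard : #((s.powersetCard k).filter (x ∈ ·)) = (#s - 1).choose (k - 1) := by
    simpa using card_filter_powersetCard_subset {x} s k (singleton_subset_iff.2 hx) (by simpa)
  rw [← sum_filter, sum_const, hcard, nsmul_eq_mul]

lemma sum_singleton_div_card_le {α : Type*} [DecidableEq α] (s : Finset α) {k : ℕ}
    (hk1 : 1 ≤ k) (hks : k ≤ #s) {h : Finset α → ℝ} (hh : Monotone h) :
    (∑ x ∈ s, h {x}) / #s ≤ (∑ S ∈ s.powersetCard k, h S) / (#s).choose k := by
  have hdouble : ((#s - 1).choose (k - 1) : ℝ) * ∑ x ∈ s, h {x} ≤ k * ∑ S ∈ s.powersetCard k, h S :=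
    calc ((#s - 1).choose (k - 1) : ℝ) * ∑ x ∈ s, h {x}
        = ∑ S ∈ s.powersetCard k, ∑ x ∈ S, h {x} := (sum_powersetCard_sum s hk1 _).symm
      _ ≤ ∑ S ∈ s.powersetCard k, ∑ _x ∈ S, h S :=
        sum_le_sum fun S _ => sum_le_sum fun x hx => hh (singleton_subset_iff.2 hx)
      _ = k * ∑ S ∈ s.powersetCard k, h S := by
        rw [mul_sum]
        exact sum_congr rfl fun S hS => by rw [sum_const, (mem_powersetCard.1 hS).2, nsmul_eq_mul]
  have hchoose : (#s : ℝ) * (#s - 1).choose (k - 1) = (#s).choose k * k := by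
    obtain ⟨m, hm⟩ : ∃ m, #s = m + 1 := ⟨#s - 1, by omega⟩
    obtain ⟨j, rfl⟩ : ∃ j, k = j + 1 := ⟨k - 1, by omega⟩
    rw [hm]
    exact_mod_cast Nat.add_one_mul_choose_eq m j
  have hs : (0 : ℝ) < #s := by exact_mod_cast (by omega : 0 < #s)
  have hc : (0 : ℝ) < (#s).choose k := by exact_mod_cast Nat.choose_pos hks
  have hk : (0 : ℝ) < k := by exact_mod_cast hk1
  rw [div_le_div_iff₀ hs hc, ← mul_le_mul_iff_of_pos_right hk]
  calc (∑ x ∈ s, h {x}) * (#s).choose k * k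
      = #s * ((#s - 1).choose (k - 1) * ∑ x ∈ s, h {x}) := by rw [mul_assoc, ← hchoose]; ring
    _ ≤ #s * (k * ∑ S ∈ s.powersetCard k, h S) := mul_le_mul_of_nonneg_left hdouble hs.le
    _ = (∑ S ∈ s.powersetCard k, h S) * #s * k := by ring

lemma monotone_of_forall_update {ι β γ : Type*} [Fintype ι] [DecidableEq ι] [Preorder β]
    [Preorder γ] {f : (ι → β) → γ} (hf : ∀ x i, Monotone fun b => f (Function.update x i b)) :
    Monotone f := by
  intro x y hxy
  have key : ∀ s : Finset ι, f x ≤ f (s.piecewise y x) := by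
    intro s
    induction s using Finset.induction_on with
    | empty => simp
    | insert a s ha ih =>
      have hx : s.piecewise y x = Function.update (s.piecewise y x) a (x a) := by
        rw [eq_comm, Function.update_eq_self_iff, piecewise_eq_of_notMem _ _ _ ha]
      refine ih.trans ?_
      rw [piecewise_insert, hx]
      simpa using hf (s.piecewise y x) a (hxy a)
  simpa using key univ

section ProductWeights

variable {ι β : Type*} [Fintype ι] [DecidableEq ι] [Fintype β]

lemma sum_mul_prod_eq_sum_mul_sum (g : (ι → β) → ℝ) (u : ι → β → ℝ) (j : ι) :
    ∑ σ, g σ * ∏ i, u i (σ i) =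
      ∑ b, u j b * ∑ ρ : {i // i ≠ j} → β,
        g ((Equiv.funSplitAt j β).symm (b, ρ)) * ∏ i : {i // i ≠ j}, u i (ρ i) := by
  rw [← (Equiv.funSplitAt j β).symm.sum_comp, Fintype.sum_prod_type]
  refine sum_congr rfl fun b _ => ?_
  rw [mul_sum]
  refine sum_congr rfl fun ρ _ => ?_
  have hj : (Equiv.funSplitAt j β).symm (b, ρ) j = b := by simp
  have hne : ∀ i : {i // i ≠ j}, (Equiv.funSplitAt j β).symm (b, ρ) i = ρ i := fun i => by
    rw [Equiv.funSplitAt_symm_apply, dif_neg i.2]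
  rw [Fintype.prod_eq_mul_prod_subtype_ne _ j, hj]
  simp only [hne]
  ring

lemma sum_mul_prod_le_update [Preorder β] {g : (ι → β) → ℝ} (hg : Monotone g)
    {u : ι → β → ℝ} (hu : 0 ≤ u) {j : ι} {v : β → ℝ}
    (hv : ∀ h : β → ℝ, Monotone h → ∑ b, u j b * h b ≤ ∑ b, v b * h b) :
    ∑ σ, g σ * ∏ i, u i (σ i) ≤ ∑ σ, g σ * ∏ i, Function.update u j v i (σ i) := by
  have hrest : ∀ ρ : {i // i ≠ j} → β,
      ∏ i : {i // i ≠ j}, Function.update u j v i (ρ i) = ∏ i : {i // i ≠ j}, u i (ρ i) :=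
    fun ρ => prod_congr rfl fun i _ => by rw [Function.update_of_ne i.2]
  rw [sum_mul_prod_eq_sum_mul_sum _ _ j, sum_mul_prod_eq_sum_mul_sum _ _ j,
    Function.update_self]
  simp only [hrest]
  refine hv _ fun b b' hbb' => sum_le_sum fun ρ _ => ?_
  refine mul_le_mul_of_nonneg_right (hg fun i => ?_) (prod_nonneg fun i _ => hu _ _)
  simp only [Equiv.funSplitAt_symm_apply]
  split_ifs
  exacts [hbb', le_rfl]

lemma sum_prod_eq_one {w : β → ℝ} (hw : ∑ b, w b = 1) : ∑ τ : ι → β, ∏ i, w (τ i) = 1 := by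
  rw [← Fintype.prod_sum, hw, prod_const_one]

lemma sum_indicator_mul_eq_mul_sum_mask {w : β → ℝ} (hw : ∑ b, w b = 1) (p : ι → Prop)
    [DecidablePred p] (b₀ : β) (f : (ι → β) → ℝ) :
    ∑ τ, {τ : ι → β | ∀ i, p i → τ i = b₀}.indicator (fun τ => ∏ i, w (τ i)) τ * f τ =
      (∏ _i : {i // p i}, w b₀) *
        ∑ τ : ι → β, (∏ i, w (τ i)) * f (fun i => if p i then b₀ else τ i) := by
  set e := (Equiv.piEquivPiSubtypeProd p fun _ => β).symm
  have hprod : ∀ a b, ∏ i, w (e (a, b) i) = (∏ i, w (a i)) * ∏ i, w (b i) := by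
    intro a b
    rw [← Fintype.prod_subtype_mul_prod_subtype p]
    congr 1 <;> exact prod_congr rfl fun i _ => by simp [e, i.2]
  have hmask : ∀ a b, (fun i => if p i then b₀ else e (a, b) i) = e (fun _ => b₀, b) := by
    intro a b; funext i; by_cases hi : p i <;> simp [e, hi]
  have hmem : ∀ a b, e (a, b) ∈ {τ : ι → β | ∀ i, p i → τ i = b₀} ↔ a = fun _ => b₀ := by
    intro a b
    simp only [Set.mem_ofPred_eq, funext_iff, Subtype.forall, e,
      Equiv.piEquivPiSubtypeProd_symm_apply]
    exact forall₂_congr fun i hi => by rw [dif_pos hi]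
  conv_rhs => rw [← e.sum_comp, Fintype.sum_prod_type]
  rw [← e.sum_comp, Fintype.sum_prod_type, Fintype.sum_eq_single (fun _ => b₀)]
  · simp only [hmask, hprod, mul_assoc, ← mul_sum, ← sum_mul, sum_prod_eq_one hw, one_mul]
    rw [mul_sum]
    refine sum_congr rfl fun b _ => ?_
    rw [Set.indicator_of_mem ((hmem _ b).2 rfl), hprod, mul_assoc]
  · intro a ha
    refine sum_eq_zero fun b _ => ?_
    rw [Set.indicator_of_notMem (mt (hmem a b).1 ha), zero_mul]

end ProductWeights

noncomputable def typeProb (μ : ℝ) (t : Bool) : ℝ := if t then μ else 1 - μ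

lemma sum_typeProb (μ : ℝ) : ∑ t, typeProb μ t = 1 := by
  simp [typeProb]

lemma typeProb_nonneg {μ : ℝ} (hμ0 : 0 ≤ μ) (hμ1 : μ ≤ 1) (t : Bool) : 0 ≤ typeProb μ t := by
  cases t <;> simp [typeProb] <;> linarith

noncomputable def selectionProb (n k : ℕ) (i : Fin n) (S : Finset (Fin n)) : ℝ :=
  if i ∉ S ∧ #S = k then ((n - 1).choose k : ℝ)⁻¹ else 0

lemma selectionProb_nonneg (n k : ℕ) (i : Fin n) (S : Finset (Fin n)) :
    0 ≤ selectionProb n k i S := by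
  unfold selectionProb; split <;> positivity

lemma sum_selectionProb_mul (n k : ℕ) (i : Fin n) (h : Finset (Fin n) → ℝ) :
    ∑ S, selectionProb n k i S * h S =
      (∑ S ∈ (univ.erase i).powersetCard k, h S) / (n - 1).choose k := by
  have hfilter : univ.filter (fun S : Finset (Fin n) => i ∉ S ∧ #S = k) =
      (univ.erase i).powersetCard k := by
    ext S
    simp only [mem_filter, mem_univ, true_and, mem_powersetCard, subset_erase, subset_univ]
  simp only [selectionProb, ite_mul, zero_mul]
  rw [← sum_filter, hfilter, ← mul_sum, inv_mul_eq_div]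

lemma sum_selectionProb (n k : ℕ) (i : Fin n) (hk : k < n) : ∑ S, selectionProb n k i S = 1 := by
  have h := sum_selectionProb_mul n k i 1
  simp only [Pi.one_apply, mul_one, sum_const, card_powersetCard, card_erase_of_mem (mem_univ i),
    card_univ, Fintype.card_fin, nsmul_eq_mul] at h
  rw [h, div_self]
  exact_mod_cast (Nat.choose_pos (by omega)).ne'

lemma sum_selectionProb_one_mul_le {n K : ℕ} (hK : 1 ≤ K) (hKn : K < n) (i : Fin n)
    {h : Finset (Fin n) → ℝ} (hh : Monotone h) :
    ∑ S, selectionProb n 1 i S * h S ≤ ∑ S, selectionProb n K i S * h S := by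
  have hcard : #(univ.erase i) = n - 1 := by simp
  have := sum_singleton_div_card_le (univ.erase i) hK (by omega) hh
  rw [hcard] at this
  rw [sum_selectionProb_mul, sum_selectionProb_mul, powersetCard_one, sum_map, Nat.choose_one_right]
  simpa using this

noncomputable def probGivenTypes (n K : ℕ) (F : Set (Fin n → Finset (Fin n)))
    (τ : Fin n → Bool) : ℝ :=
  ∑ σ, F.indicator 1 σ * ∏ i, selectionProb n (Ktype K (τ i)) i (σ i)

lemma probGivenTypes_univ {n K : ℕ} (hK : 1 ≤ K) (hKn : K < n) (τ : Fin n → Bool) :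
    probGivenTypes n K Set.univ τ = 1 := by
  simp only [probGivenTypes, Set.indicator_univ, Pi.one_apply, one_mul]
  rw [← Fintype.prod_sum]
  refine prod_eq_one fun i _ => sum_selectionProb n _ i ?_
  cases τ i <;> simp [Ktype] <;> omega

lemma monotone_indicator_one_of_isUpperSet {α : Type*} [Preorder α] {F : Set α}
    (hF : IsUpperSet F) : Monotone (F.indicator (1 : α → ℝ)) := by
  intro σ σ' hσσ'
  by_cases hσ : σ ∈ F
  · simp [hσ, hF hσσ' hσ]
  · rw [Set.indicator_of_notMem hσ]
    exact Set.indicator_nonneg (fun _ _ => zero_le_one) _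

lemma probGivenTypes_update_true_le {n K : ℕ} (hK : 1 ≤ K) (hKn : K < n)
    {F : Set (Fin n → Finset (Fin n))} (hF : IsUpperSet F) (τ : Fin n → Bool) (j : Fin n) :
    probGivenTypes n K F (Function.update τ j true) ≤
      probGivenTypes n K F (Function.update τ j false) := by
  have hupdate : Function.update (fun i => selectionProb n (Ktype K (Function.update τ j true i)) i)
      j (selectionProb n K j) =
        fun i => selectionProb n (Ktype K (Function.update τ j false i)) i := by
    funext i
    by_cases hi : i = j
    · subst hi; simp [Ktype]
    · simp [hi]
  have := sum_mul_prod_le_update (monotone_indicator_one_of_isUpperSet hF)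
    (u := fun i => selectionProb n (Ktype K (Function.update τ j true i)) i)
    (fun i S => selectionProb_nonneg n _ i S) (j := j) (v := selectionProb n K j)
    fun h hh => by simpa [Ktype] using sum_selectionProb_one_mul_le hK hKn j hh
  rw [hupdate] at this
  exact this

lemma antitone_probGivenTypes {n K : ℕ} (hK : 1 ≤ K) (hKn : K < n)
    {F : Set (Fin n → Finset (Fin n))} (hF : IsUpperSet F) :
    Antitone (probGivenTypes n K F) :=
  monotone_of_forall_update (γ := ℝᵒᵈ) fun τ j b b' hbb' => by
    cases b <;> cases b'
    · exact le_rfl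
    · exact probGivenTypes_update_true_le hK hKn hF τ j
    · exact absurd hbb' (by decide)
    · exact le_rfl

lemma density_eq_mul (n : ℕ) (μ : ℝ) (K : ℕ) (τ : Fin n → Bool) (σ : Fin n → Finset (Fin n)) :
    density n μ K (τ, σ) =
      (∏ i, typeProb μ (τ i)) * ∏ i, selectionProb n (Ktype K (τ i)) i (σ i) := by
  rw [← prod_mul_distrib]
  rfl

lemma prob_fst_inter_snd (n : ℕ) (μ : ℝ) (K : ℕ) (A : Set (Fin n → Bool))
    (F : Set (Fin n → Finset (Fin n))) :
    prob n μ K (Prod.fst ⁻¹' A ∩ Prod.snd ⁻¹' F) =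
      ∑ τ, A.indicator (fun τ => ∏ i, typeProb μ (τ i)) τ * probGivenTypes n K F τ := by
  rw [prob, Fintype.sum_prod_type]
  refine sum_congr rfl fun τ _ => ?_
  rw [probGivenTypes, mul_sum]
  refine sum_congr rfl fun σ _ => ?_
  by_cases hτ : τ ∈ A <;> by_cases hσ : σ ∈ F <;>
    simp [hτ, hσ, density_eq_mul, mul_comm]

lemma prob_fst_preimage {n K : ℕ} (hK : 1 ≤ K) (hKn : K < n) (μ : ℝ) (A : Set (Fin n → Bool)) :
    prob n μ K (Prod.fst ⁻¹' A) = ∑ τ, A.indicator (fun τ => ∏ i, typeProb μ (τ i)) τ := by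
  rw [← Set.inter_univ (Prod.fst ⁻¹' A), ← Set.preimage_univ (f := Prod.snd), prob_fst_inter_snd]
  simp [probGivenTypes_univ hK hKn]

lemma prob_snd_preimage (n : ℕ) (μ : ℝ) (K : ℕ) (F : Set (Fin n → Finset (Fin n))) :
    prob n μ K (Prod.snd ⁻¹' F) = ∑ τ, (∏ i, typeProb μ (τ i)) * probGivenTypes n K F τ := by
  rw [← Set.univ_inter (Prod.snd ⁻¹' F), ← Set.preimage_univ (f := Prod.fst), prob_fst_inter_snd]
  simp

lemma graph_mono {n : ℕ} {ω ω' : Config n} (h : ω.2 ≤ ω'.2) : graph ω ≤ graph ω' :=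
  fun i j hij => ⟨hij.1, hij.2.imp (@h i j) (@h j i)⟩

lemma exists_isUpperSet_eventB_inter_eventC (n ℓ r : ℕ) :
    ∃ F : Set (Fin n → Finset (Fin n)),
      IsUpperSet F ∧ eventB n ℓ r ∩ eventC n ℓ r = Prod.snd ⁻¹' F := by
  -- `graph` ignores the types, so any type vector can stand in the first component.
  refine ⟨{σ | ((fun _ => false, σ) : Config n) ∈ eventB n ℓ r ∩ eventC n ℓ r}, ?_, rfl⟩
  rintro σ σ' hσσ' ⟨hB, hC⟩
  have hle : graph ((fun _ => false, σ) : Config n) ≤ graph (fun _ => false, σ') := graph_mono hσσ'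
  exact ⟨fun i hi => (hB i hi).imp fun j hj => ⟨hj.1, hj.2.1, hle hj.2.2⟩,
    hC.mono fun a b hab => hle hab⟩

theorem BC_more_likely_given_type2_general
    (μ : ℝ) (hμ0 : 0 < μ) (hμ1 : μ < 1)
    (n : ℕ) (K : ℕ) (hK : 2 ≤ K) (hKn : K < n)
    (ℓ r : ℕ) :
    prob n μ K (eventB n ℓ r ∩ eventC n ℓ r) ≤
      cprob n μ K (eventB n ℓ r ∩ eventC n ℓ r) (eventX n ℓ r false) := by
  obtain ⟨F, hF, hBC⟩ := exists_isUpperSet_eventB_inter_eventC n ℓ r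
  set p : Fin n → Prop := fun j => ℓ ≤ (j : ℕ) ∧ (j : ℕ) < ℓ + r
  set mask : (Fin n → Bool) → Fin n → Bool := fun τ i => if p i then false else τ i
  have hX : eventX n ℓ r false = Prod.fst ⁻¹' {τ | ∀ j, p j → τ j = false} := by
    ext; simp [eventX, p, and_imp]
  have hmask := sum_indicator_mul_eq_mul_sum_mask (sum_typeProb μ) p false
  have hc : 0 < ∏ _i : {j // p j}, typeProb μ false :=
    prod_pos fun _ _ => by simp [typeProb, hμ1]
  have hPX : prob n μ K (eventX n ℓ r false) = ∏ _i : {j // p j}, typeProb μ false := by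
    rw [hX, prob_fst_preimage (by omega) hKn]
    simpa [sum_prod_eq_one (sum_typeProb μ)] using hmask 1
  have hPBCX : prob n μ K (eventB n ℓ r ∩ eventC n ℓ r ∩ eventX n ℓ r false) =
      (∏ _i : {j // p j}, typeProb μ false) *
        ∑ τ, (∏ i, typeProb μ (τ i)) * probGivenTypes n K F (mask τ) := by
    rw [hBC, hX, Set.inter_comm, prob_fst_inter_snd, hmask]
  rw [cprob, hPBCX, hPX, mul_div_cancel_left₀ _ hc.ne', hBC, prob_snd_preimage]
  refine sum_le_sum fun τ _ => mul_le_mul_of_nonneg_left ?_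
    (prod_nonneg fun i _ => typeProb_nonneg hμ0.le hμ1.le _)
  refine antitone_probGivenTypes (by omega) hKn hF fun i => ?_
  by_cases hi : p i <;> simp [mask, hi]

/-- Conditioning on all nodes of `T` being type-2 increases the
probability of `B ∩ C`: `P[B ∩ C] ≤ P[B ∩ C | X_2]`. -/
theorem BC_more_likely_given_type2
    (μ : ℝ) (hμ0 : 0 < μ) (hμ1 : μ < 1)
    (n : ℕ) (hn : 2 ≤ n) (K : ℕ) (hK : 2 ≤ K) (hKn : K < n)
    (ℓ r : ℕ) (hr : 2 ≤ r) (hℓr : ℓ + r ≤ n - 1) :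
    prob n μ K (eventB n ℓ r ∩ eventC n ℓ r) ≤
      cprob n μ K (eventB n ℓ r ∩ eventC n ℓ r) (eventX n ℓ r false) :=
  BC_more_likely_given_type2_general μ hμ0 hμ1 n K hK hKn ℓ r

end KOut
end

section
/- Union bound with exchangeability for the key events: fix 0<μ<1, n ≥ 2, 2 ≤ K_n < n, and integers k ≥ 2 and 0 ≤ ℓ ≤ k−1. In H(n;μ,K_n), let δ be the minimum node degree and κ_v the vertex connectivity. For 2 ≤ r ≤ ⌊(n−ℓ)/2⌋ let A_{ℓ,r} := B ∩ C ∩ D, where, with U = {v_1,…,v_ℓ} and T = {v_{ℓ+1},…,v_{ℓ+r}}: B is the event that every node of U is adjacent to some node of T, C is the event that the induced subgraph on T is connected, and D is the event that there is no edge between T and {v_{ℓ+r+1},…,v_n}. Then P[ δ > ℓ and κ_v = ℓ ] ≤ Σ_{r=2}^{⌊(n−ℓ)/2⌋} C(n,ℓ) · C(n−ℓ,r) · P[A_{ℓ,r}]. -/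
open Finset Filter Asymptotics

namespace KOut

/-- Vertex connectivity: the minimum number of vertices whose removal disconnects
the graph. -/
noncomputable def vertexConn {n : ℕ} (G : SimpleGraph (Fin n)) : ℕ :=
  sInf {m | ∃ S : Finset (Fin n), S.card = m ∧ ¬ (G.induce ((↑S : Set (Fin n))ᶜ)).Connected}

/-- `D`: the event that there is no edge between `T = {v_{ℓ+1},…,v_{ℓ+r}}` and
`{v_{ℓ+r+1},…,v_n}`. -/
def eventD (n ℓ r : ℕ) : Set (Config n) :=
  {ω | ∀ i : Fin n, ℓ ≤ (i : ℕ) → (i : ℕ) < ℓ + r →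
    ∀ j : Fin n, ℓ + r ≤ (j : ℕ) → ¬ (graph ω).Adj i j}


/-! If `δ > ℓ` and `κ_v = ℓ`, take a minimum vertex cut `S` (so `|S| = ℓ`) and let `T` be the
smaller of two components of the graph with `S` removed. Then `T` induces a connected graph, has
no edge leaving `S ∪ T`, contains a vertex together with a neighbour outside `S` (as `δ > ℓ`), so
`2 ≤ |T| ≤ ⌊(n-ℓ)/2⌋`, and every node of `S` has a neighbour in `T`: otherwise `S` minus that node
would still be a cut. The law of `H(n;μ,K_n)` is invariant under relabelling the nodes, so each of
the `C(n,ℓ) C(n-ℓ,r)` placements of `(S, T)` is as likely as `U = {v_1,…,v_ℓ}`,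
`T = {v_{ℓ+1},…,v_{ℓ+r}}`, and a union bound over the placements gives the claim. -/

section Relabel

variable {n : ℕ}

def relabel (σ : Equiv.Perm (Fin n)) : Config n ≃ Config n :=
  (σ.arrowCongr (Equiv.refl Bool)).prodCongr (σ.arrowCongr σ.finsetCongr)

lemma relabel_apply (σ : Equiv.Perm (Fin n)) (ω : Config n) :
    relabel σ ω = (ω.1 ∘ σ.symm, fun i => (ω.2 (σ.symm i)).map σ.toEmbedding) :=
  rfl

def graphIsoRelabel (σ : Equiv.Perm (Fin n)) (ω : Config n) :
    graph ω ≃g graph (relabel σ ω) where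
  toEquiv := σ
  map_rel_iff' := by
    intro i j
    simp [graph, relabel_apply, Finset.mem_map_equiv]

lemma density_relabel (σ : Equiv.Perm (Fin n)) (μ : ℝ) (K : ℕ) (ω : Config n) :
    density n μ K (relabel σ ω) = density n μ K ω := by
  unfold density
  refine Fintype.prod_equiv σ.symm _ _ fun i => ?_
  simp only [relabel_apply, Function.comp_apply, Finset.mem_map_equiv, Finset.card_map]
  congr

lemma prob_preimage_relabel (σ : Equiv.Perm (Fin n)) (μ : ℝ) (K : ℕ) (E : Set (Config n)) :
    prob n μ K (relabel σ ⁻¹' E) = prob n μ K E := by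
  classical
  unfold prob
  refine Fintype.sum_equiv (relabel σ) _ _ fun ω => ?_
  simp only [Set.indicator_apply, Set.mem_preimage, density_relabel]

end Relabel

section Prob

variable {n : ℕ} {μ : ℝ} (K : ℕ)

lemma density_nonneg (h0 : 0 ≤ μ) (h1 : μ ≤ 1) (ω : Config n) : 0 ≤ density n μ K ω := by
  unfold density
  refine Finset.prod_nonneg fun i _ => mul_nonneg ?_ ?_
  · split <;> linarith
  · split <;> positivity

lemma prob_mono (h0 : 0 ≤ μ) (h1 : μ ≤ 1) {E F : Set (Config n)} (hEF : E ⊆ F) :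
    prob n μ K E ≤ prob n μ K F :=
  Finset.sum_le_sum fun ω _ =>
    Set.indicator_le_indicator_of_subset hEF (density_nonneg K h0 h1) ω

lemma prob_biUnion_le {ι : Type*} (h0 : 0 ≤ μ) (h1 : μ ≤ 1) (s : Finset ι)
    (E : ι → Set (Config n)) :
    prob n μ K (⋃ i ∈ s, E i) ≤ ∑ i ∈ s, prob n μ K (E i) := by
  unfold prob
  rw [Finset.sum_comm]
  refine Finset.sum_le_sum fun ω _ => ?_
  have hnonneg : ∀ i ∈ s, 0 ≤ (E i).indicator (density n μ K) ω :=
    fun i _ => Set.indicator_nonneg (fun ω _ => density_nonneg K h0 h1 ω) ω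
  by_cases hω : ω ∈ ⋃ i ∈ s, E i
  · obtain ⟨i, hi, hωi⟩ := Set.mem_iUnion₂.1 hω
    rw [Set.indicator_of_mem hω, ← Set.indicator_of_mem hωi (density n μ K)]
    exact Finset.single_le_sum hnonneg hi
  · rw [Set.indicator_of_notMem hω]
    exact Finset.sum_nonneg hnonneg

end Prob

section Separation

open SimpleGraph

variable {V : Type*} {G : SimpleGraph V} {S T : Finset V} {v w x y : V}

-- The events `B`, `C`, `D` for an arbitrary placement `S`, `T` of the sets `U`, `T`.
structure IsAttachedComponent (G : SimpleGraph V) (S T : Finset V) : Prop where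
  disjoint : Disjoint S T
  exists_adj : ∀ i ∈ S, ∃ j ∈ T, G.Adj i j
  connected : (G.induce (T : Set V)).Connected
  mem_or_mem_of_adj : ∀ i ∈ T, ∀ j, G.Adj i j → j ∈ S ∨ j ∈ T

lemma IsAttachedComponent.map {W : Type*} {G' : SimpleGraph W}
    (e : G ≃g G') (h : IsAttachedComponent G S T) :
    IsAttachedComponent G' (S.map e.toEquiv.toEmbedding) (T.map e.toEquiv.toEmbedding) where
  disjoint := (Finset.disjoint_map _).2 h.disjoint
  exists_adj := by
    intro i hi
    obtain ⟨x, hx, rfl⟩ := Finset.mem_map.1 hi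
    obtain ⟨y, hy, hxy⟩ := h.exists_adj x hx
    exact ⟨e y, Finset.mem_map_of_mem _ hy, e.map_adj_iff.2 hxy⟩
  connected := by
    have hbij : Set.BijOn e (T : Set V) (T.map e.toEquiv.toEmbedding : Set W) := by
      rw [Finset.coe_map]
      exact e.injective.injOn.bijOn_image
    exact (e.induce hbij).connected_iff.1 h.connected
  mem_or_mem_of_adj := by
    intro i hi j hij
    obtain ⟨x, hx, rfl⟩ := Finset.mem_map.1 hi
    obtain ⟨y, rfl⟩ := e.surjective j
    exact (h.mem_or_mem_of_adj x hx y (e.map_adj_iff.1 hij)).imp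
      (Finset.mem_map_of_mem _) (Finset.mem_map_of_mem _)

lemma exists_walk_support_subset_of_reachable {s : Set V} {a b : s}
    (h : (G.induce s).Reachable a b) : ∃ p : G.Walk a b, ∀ x ∈ p.support, x ∈ s := by
  obtain ⟨q⟩ := h
  have hq : ∀ x ∈ (q.map (Embedding.induce s).toHom).support, x ∈ s := by
    simp only [Walk.support_map, List.mem_map]
    rintro _ ⟨z, -, rfl⟩
    exact z.2
  exact ⟨_, hq⟩

variable [Fintype V]

open Classical in
-- Empty when `v ∈ S`.
noncomputable def componentAvoiding (G : SimpleGraph V) (S : Finset V) (v : V) : Finset V :=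
  {x | ∃ p : G.Walk v x, ∀ y ∈ p.support, y ∉ S}

lemma mem_componentAvoiding :
    x ∈ componentAvoiding G S v ↔ ∃ p : G.Walk v x, ∀ y ∈ p.support, y ∉ S := by
  simp [componentAvoiding]

lemma self_mem_componentAvoiding (hv : v ∉ S) : v ∈ componentAvoiding G S v :=
  mem_componentAvoiding.2 ⟨.nil, by simpa using hv⟩

lemma mem_componentAvoiding_comm :
    w ∈ componentAvoiding G S v ↔ v ∈ componentAvoiding G S w := by
  suffices ∀ v w, w ∈ componentAvoiding G S v → v ∈ componentAvoiding G S w from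
    ⟨this v w, this w v⟩
  intro v w h
  obtain ⟨p, hp⟩ := mem_componentAvoiding.1 h
  exact mem_componentAvoiding.2 ⟨p.reverse, by simpa using hp⟩

lemma disjoint_componentAvoiding : Disjoint S (componentAvoiding G S v) := by
  refine Finset.disjoint_right.2 fun x hx => ?_
  obtain ⟨p, hp⟩ := mem_componentAvoiding.1 hx
  exact hp x p.end_mem_support

lemma mem_componentAvoiding_of_adj (hx : x ∈ componentAvoiding G S v) (hxy : G.Adj x y)
    (hy : y ∉ S) : y ∈ componentAvoiding G S v := by
  obtain ⟨p, hp⟩ := mem_componentAvoiding.1 hx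
  refine mem_componentAvoiding.2 ⟨p.concat hxy, fun z hz => ?_⟩
  rw [Walk.support_concat, List.mem_append, List.mem_singleton] at hz
  rcases hz with hz | rfl
  exacts [hp z hz, hy]

lemma disjoint_componentAvoiding_of_notMem (hw : w ∉ componentAvoiding G S v) :
    Disjoint (componentAvoiding G S v) (componentAvoiding G S w) := by
  refine Finset.disjoint_left.2 fun x hxv hxw => hw ?_
  obtain ⟨p, hp⟩ := mem_componentAvoiding.1 hxv
  obtain ⟨q, hq⟩ := mem_componentAvoiding.1 hxw
  refine mem_componentAvoiding.2 ⟨p.append q.reverse, fun y hy => ?_⟩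
  rw [Walk.mem_support_append_iff, Walk.support_reverse, List.mem_reverse] at hy
  exact hy.elim (hp y) (hq y)

lemma connected_induce_componentAvoiding (hv : v ∉ S) :
    (G.induce (componentAvoiding G S v : Set V)).Connected := by
  classical
  refine G.induce_connected_of_patches v (self_mem_componentAvoiding hv) fun {x} hx => ?_
  obtain ⟨p, hp⟩ := mem_componentAvoiding.1 hx
  refine ⟨{y | y ∈ p.support}, fun y hy => ?_, p.start_mem_support, p.end_mem_support,
    p.connected_induce_support.preconnected _ _⟩
  exact mem_componentAvoiding.2
    ⟨p.takeUntil y hy, fun z hz => hp z (p.support_takeUntil_subset_support hy hz)⟩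

lemma two_le_card_componentAvoiding [DecidableRel G.Adj] (hv : v ∉ S)
    (hδ : #S < G.minDegree) :
    2 ≤ #(componentAvoiding G S v) := by
  obtain ⟨y, hy, hyS⟩ : ∃ y ∈ G.neighborFinset v, y ∉ S := by
    refine Finset.not_subset.1 fun hsub => ?_
    have := Finset.card_le_card hsub
    have := G.minDegree_le_degree v
    rw [card_neighborFinset_eq_degree] at *
    omega
  rw [mem_neighborFinset] at hy
  exact Finset.one_lt_card.2 ⟨v, self_mem_componentAvoiding hv, y,
    mem_componentAvoiding_of_adj (self_mem_componentAvoiding hv) hy hyS, hy.ne⟩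

-- A walk leaving the component must cross its boundary, and it can only do so through `i`.
lemma exists_adj_componentAvoiding [DecidableEq V] {i : V} (hv : v ∉ S)
    (hw : w ∉ componentAvoiding G S v) (p : G.Walk v w) (hp : ∀ y ∈ p.support, y ∉ S.erase i) :
    ∃ j ∈ componentAvoiding G S v, G.Adj i j := by
  obtain ⟨d, hd, hfst, hsnd⟩ :=
    p.exists_boundary_dart _ (Finset.mem_coe.2 (self_mem_componentAvoiding hv)) hw
  have hS : d.snd ∈ S := by
    by_contra h
    exact hsnd (mem_componentAvoiding_of_adj hfst d.adj h)
  have hi' : d.snd = i := by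
    by_contra h
    exact hp _ (p.dart_snd_mem_support_of_mem_darts hd) (Finset.mem_erase.2 ⟨h, hS⟩)
  exact ⟨d.fst, hfst, hi' ▸ d.adj.symm⟩

lemma isAttachedComponent_componentAvoiding [DecidableEq V] (hv : v ∉ S) (hw : w ∉ S)
    (hvw : w ∉ componentAvoiding G S v)
    (hcut : ∀ i ∈ S, (G.induce ((S.erase i : Set V))ᶜ).Connected) :
    IsAttachedComponent G S (componentAvoiding G S v) where
  disjoint := disjoint_componentAvoiding
  exists_adj i hi := by
    obtain ⟨p, hp⟩ := exists_walk_support_subset_of_reachable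
      ((hcut i hi).preconnected ⟨v, by simp [hv]⟩ ⟨w, by simp [hw]⟩)
    exact exists_adj_componentAvoiding hv hvw p hp
  connected := connected_induce_componentAvoiding hv
  mem_or_mem_of_adj i hi j hij := or_iff_not_imp_left.2 (mem_componentAvoiding_of_adj hi hij)

lemma exists_isAttachedComponent [DecidableEq V] [DecidableRel G.Adj] (hδ : #S < G.minDegree)
    (hS : ¬ (G.induce (S : Set V)ᶜ).Connected)
    (hcut : ∀ i ∈ S, (G.induce ((S.erase i : Set V))ᶜ).Connected) :
    ∃ T, IsAttachedComponent G S T ∧ 2 ≤ #T ∧ 2 * #T ≤ Fintype.card V - #S := by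
  have : Nonempty V := by
    by_contra! h
    simp at hδ
  obtain ⟨a, -, ha⟩ := Finset.exists_mem_notMem_of_card_lt_card (t := Finset.univ)
    (by simpa using hδ.trans G.minDegree_lt_card)
  have hpre : ¬ (G.induce (S : Set V)ᶜ).Preconnected :=
    fun h => hS (connected_iff _ |>.2 ⟨h, ⟨⟨a, ha⟩⟩⟩)
  simp only [Preconnected, not_forall] at hpre
  obtain ⟨⟨a, ha⟩, ⟨b, hb⟩, hab⟩ := hpre
  have hba : b ∉ componentAvoiding G S a := fun h => by
    obtain ⟨p, hp⟩ := mem_componentAvoiding.1 h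
    exact hab (p.induce _ hp).reachable
  have hsum : #(componentAvoiding G S a) + #(componentAvoiding G S b) ≤ Fintype.card V - #S := by
    rw [← Finset.card_union_of_disjoint (disjoint_componentAvoiding_of_notMem hba),
      ← Finset.card_compl]
    exact Finset.card_le_card (Finset.union_subset
      (Finset.subset_compl_iff_disjoint_left.2 disjoint_componentAvoiding)
      (Finset.subset_compl_iff_disjoint_left.2 disjoint_componentAvoiding))
  rcases le_total #(componentAvoiding G S a) #(componentAvoiding G S b) with h | h
  · exact ⟨_, isAttachedComponent_componentAvoiding ha hb hba hcut,
      two_le_card_componentAvoiding ha hδ, by omega⟩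
  · exact ⟨_, isAttachedComponent_componentAvoiding hb ha
      (mt mem_componentAvoiding_comm.1 hba) hcut, two_le_card_componentAvoiding hb hδ, by omega⟩

end Separation

lemma exists_cut_of_vertexConn_eq {n ℓ : ℕ} {G : SimpleGraph (Fin n)} (hκ : vertexConn G = ℓ) :
    ∃ S : Finset (Fin n), #S = ℓ ∧ ¬ (G.induce (S : Set (Fin n))ᶜ).Connected ∧
      ∀ i ∈ S, (G.induce ((S.erase i : Set (Fin n)))ᶜ).Connected := by
  set cutSizes := {m | ∃ S : Finset (Fin n), #S = m ∧ ¬ (G.induce (S : Set (Fin n))ᶜ).Connected}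
  have hκ' : sInf cutSizes = ℓ := hκ
  have hne : cutSizes.Nonempty :=
    ⟨n, Finset.univ, by simp, fun h => by obtain ⟨⟨x, hx⟩⟩ := h.nonempty; simp at hx⟩
  obtain ⟨S, hS, hdisc⟩ := hκ' ▸ Nat.sInf_mem hne
  refine ⟨S, hS, hdisc, fun i hi => ?_⟩
  by_contra h
  have := Nat.sInf_le (show #(S.erase i) ∈ cutSizes from ⟨S.erase i, rfl, h⟩)
  rw [Finset.card_erase_of_mem hi, hκ', ← hS] at this
  have := Finset.card_pos.2 ⟨i, hi⟩
  omega

theorem exists_perm_map_finset_pair_eq {α : Type*} {S T A B : Finset α}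
    (hST : Disjoint S T) (hAB : Disjoint A B) (hSA : #S = #A) (hTB : #T = #B) :
    ∃ σ : Equiv.Perm α, S.map σ.toEmbedding = A ∧ T.map σ.toEmbedding = B := by
  set eS := S.equivOfCardEq hSA
  set eT := T.equivOfCardEq hTB
  obtain ⟨σ, hσ⟩ := Equiv.Perm.exists_extending_pair
    (Sum.elim (fun x : S => (x : α)) (fun x : T => (x : α)))
    (Sum.elim (fun x : S => (eS x : α)) (fun x : T => (eT x : α)))
    (Subtype.val_injective.sumElim Subtype.val_injective
      fun x y hxy => Finset.disjoint_left.1 hST x.2 (hxy ▸ y.2))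
    ((Subtype.val_injective.comp eS.injective).sumElim (Subtype.val_injective.comp eT.injective)
      fun x y hxy => Finset.disjoint_left.1 hAB (eS x).2 (by simpa [← hxy] using (eT y).2))
  refine ⟨σ, Finset.eq_of_subset_of_card_le (fun b hb => ?_) (by simp [hSA]),
    Finset.eq_of_subset_of_card_le (fun b hb => ?_) (by simp [hTB])⟩
  · obtain ⟨a, ha, rfl⟩ := Finset.mem_map.1 hb
    exact hσ (.inl ⟨a, ha⟩) ▸ (eS ⟨a, ha⟩).2
  · obtain ⟨a, ha, rfl⟩ := Finset.mem_map.1 hb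
    exact hσ (.inr ⟨a, ha⟩) ▸ (eT ⟨a, ha⟩).2

section Blocks

variable {n : ℕ}

-- `{v_{a+1}, …, v_b}` in the paper's numbering, which starts at `v_1`.
def nodeBlock (n a b : ℕ) : Finset (Fin n) := {i | a ≤ (i : ℕ) ∧ (i : ℕ) < b}

lemma mem_nodeBlock {a b : ℕ} {i : Fin n} : i ∈ nodeBlock n a b ↔ a ≤ (i : ℕ) ∧ (i : ℕ) < b := by
  simp [nodeBlock]

lemma card_nodeBlock {a b : ℕ} (h : b ≤ n) : #(nodeBlock n a b) = b - a := by
  rw [← Nat.card_Ico, ← Finset.card_map Fin.valEmbedding]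
  congr 1
  ext m
  simp only [Finset.mem_map, mem_nodeBlock, Fin.valEmbedding_apply, Finset.mem_Ico]
  constructor
  · rintro ⟨i, hi, rfl⟩
    exact hi
  · intro hm
    exact ⟨⟨m, by omega⟩, hm, rfl⟩

lemma mem_eventB_inter_eventC_inter_eventD {ℓ r : ℕ} {ω : Config n}
    (h : IsAttachedComponent (graph ω) (nodeBlock n 0 ℓ) (nodeBlock n ℓ (ℓ + r))) :
    ω ∈ eventB n ℓ r ∩ eventC n ℓ r ∩ eventD n ℓ r := by
  refine ⟨⟨fun i hi => ?_, ?_⟩, fun i hi₁ hi₂ j hj hij => ?_⟩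
  · simpa [mem_nodeBlock, and_assoc] using h.exists_adj i (by simpa [mem_nodeBlock] using hi)
  · have hT : (nodeBlock n ℓ (ℓ + r) : Set (Fin n)) =
        {v : Fin n | ℓ ≤ (v : ℕ) ∧ (v : ℕ) < ℓ + r} := by
      ext
      simp [mem_nodeBlock]
    change ((graph ω).induce {v : Fin n | ℓ ≤ (v : ℕ) ∧ (v : ℕ) < ℓ + r}).Connected
    exact hT ▸ h.connected
  · have := h.mem_or_mem_of_adj i (mem_nodeBlock.2 ⟨hi₁, hi₂⟩) j hij
    simp only [mem_nodeBlock] at this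
    omega

end Blocks

section UnionBound

variable {n : ℕ} {μ : ℝ} (K : ℕ)

lemma prob_isAttachedComponent_le (h0 : 0 ≤ μ) (h1 : μ ≤ 1) {S T : Finset (Fin n)}
    (hST : Disjoint S T) :
    prob n μ K {ω | IsAttachedComponent (graph ω) S T} ≤
      prob n μ K (eventB n #S #T ∩ eventC n #S #T ∩ eventD n #S #T) := by
  have hcard : #S + #T ≤ n := by
    simpa [Finset.card_union_of_disjoint hST] using Finset.card_le_univ (S ∪ T)
  obtain ⟨σ, hσS, hσT⟩ := exists_perm_map_finset_pair_eq hST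
    (A := nodeBlock n 0 #S) (B := nodeBlock n #S (#S + #T))
    (Finset.disjoint_left.2 fun i hi hi' => by rw [mem_nodeBlock] at hi hi'; omega)
    (by rw [card_nodeBlock (by omega)]; omega) (by rw [card_nodeBlock hcard]; omega)
  calc prob n μ K {ω | IsAttachedComponent (graph ω) S T}
      ≤ prob n μ K (relabel σ ⁻¹' (eventB n #S #T ∩ eventC n #S #T ∩ eventD n #S #T)) := by
        refine prob_mono K h0 h1 fun ω hω => mem_eventB_inter_eventC_inter_eventD ?_
        rw [← hσS, ← hσT]
        exact hω.map (graphIsoRelabel σ ω)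
    _ = _ := prob_preimage_relabel σ μ K _

def placements (n ℓ r : ℕ) : Finset (Σ _ : Finset (Fin n), Finset (Fin n)) :=
  (Finset.univ.powersetCard ℓ).sigma fun S => Sᶜ.powersetCard r

lemma mem_placements {ℓ r : ℕ} {p : Σ _ : Finset (Fin n), Finset (Fin n)} :
    p ∈ placements n ℓ r ↔ #p.1 = ℓ ∧ #p.2 = r ∧ Disjoint p.1 p.2 := by
  simp [placements, Finset.subset_compl_iff_disjoint_left, and_comm]

lemma card_placements (ℓ r : ℕ) : #(placements n ℓ r) = n.choose ℓ * (n - ℓ).choose r := by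
  rw [placements, Finset.card_sigma, Finset.sum_const_nat fun S hS => ?_, Finset.card_powersetCard,
    Finset.card_univ, Fintype.card_fin]
  rw [Finset.card_powersetCard, Finset.card_compl, Fintype.card_fin,
    (Finset.mem_powersetCard.1 hS).2]

lemma setOf_vertexConn_eq_subset_iUnion_placements (ℓ : ℕ) :
    {ω : Config n | ℓ < (graph ω).minDegree ∧ vertexConn (graph ω) = ℓ} ⊆
      ⋃ r ∈ Finset.Icc 2 ((n - ℓ) / 2), ⋃ p ∈ placements n ℓ r,
        {ω | IsAttachedComponent (graph ω) p.1 p.2} := by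
  rintro ω ⟨hδ, hκ⟩
  obtain ⟨S, hS, hdisc, hcut⟩ := exists_cut_of_vertexConn_eq hκ
  obtain ⟨T, hT, h2, hle⟩ := exists_isAttachedComponent (hS ▸ hδ) hdisc hcut
  simp only [Set.mem_iUnion, exists_prop]
  refine ⟨#T, Finset.mem_Icc.2 ⟨h2, ?_⟩, ⟨S, T⟩, mem_placements.2 ⟨hS, rfl, hT.disjoint⟩, hT⟩
  rw [Nat.le_div_iff_mul_le two_pos, ← hS]
  simp only [Fintype.card_fin] at hle
  omega

end UnionBound

theorem union_bound_exchangeability_general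
    (μ : ℝ) (hμ0 : 0 < μ) (hμ1 : μ < 1)
    (n : ℕ) (K : ℕ) (ℓ : ℕ) :
    prob n μ K {ω | ℓ < (graph ω).minDegree ∧ vertexConn (graph ω) = ℓ} ≤
      ∑ r ∈ Finset.Icc 2 ((n - ℓ) / 2),
        (n.choose ℓ : ℝ) * ((n - ℓ).choose r : ℝ) *
          prob n μ K (eventB n ℓ r ∩ eventC n ℓ r ∩ eventD n ℓ r) := by
  have h0 := hμ0.le
  have h1 := hμ1.le
  calc prob n μ K {ω | ℓ < (graph ω).minDegree ∧ vertexConn (graph ω) = ℓ}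
      ≤ prob n μ K (⋃ r ∈ Finset.Icc 2 ((n - ℓ) / 2), ⋃ p ∈ placements n ℓ r,
          {ω | IsAttachedComponent (graph ω) p.1 p.2}) :=
        prob_mono K h0 h1 (setOf_vertexConn_eq_subset_iUnion_placements ℓ)
    _ ≤ ∑ r ∈ Finset.Icc 2 ((n - ℓ) / 2), ∑ p ∈ placements n ℓ r,
          prob n μ K {ω | IsAttachedComponent (graph ω) p.1 p.2} :=
        (prob_biUnion_le K h0 h1 _ _).trans
          (Finset.sum_le_sum fun r _ => prob_biUnion_le K h0 h1 _ _)
    _ ≤ ∑ r ∈ Finset.Icc 2 ((n - ℓ) / 2),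
          #(placements n ℓ r) • prob n μ K (eventB n ℓ r ∩ eventC n ℓ r ∩ eventD n ℓ r) :=
        Finset.sum_le_sum fun r _ => Finset.sum_le_card_nsmul _ _ _ fun p hp => by
          obtain ⟨hS, hT, hST⟩ := mem_placements.1 hp
          simpa only [hS, hT] using prob_isAttachedComponent_le K h0 h1 hST
    _ = _ := by simp only [card_placements, nsmul_eq_mul, Nat.cast_mul]

/-- Union bound with exchangeability for the key events:
`P[δ > ℓ, κ_v = ℓ] ≤ ∑_{r=2}^{⌊(n-ℓ)/2⌋} C(n,ℓ) C(n-ℓ,r) P[A_{ℓ,r}]` where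
`A_{ℓ,r} = B ∩ C ∩ D`. -/
theorem union_bound_exchangeability
    (μ : ℝ) (hμ0 : 0 < μ) (hμ1 : μ < 1)
    (n : ℕ) (hn : 2 ≤ n) (K : ℕ) (hK : 2 ≤ K) (hKn : K < n)
    (k : ℕ) (hk : 2 ≤ k) (ℓ : ℕ) (hℓ : ℓ ≤ k - 1) :
    prob n μ K {ω | ℓ < (graph ω).minDegree ∧ vertexConn (graph ω) = ℓ} ≤
      ∑ r ∈ Finset.Icc 2 ((n - ℓ) / 2),
        (n.choose ℓ : ℝ) * ((n - ℓ).choose r : ℝ) *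
          prob n μ K (eventB n ℓ r ∩ eventC n ℓ r ∩ eventD n ℓ r) :=
  union_bound_exchangeability_general μ hμ0 hμ1 n K ℓ

end KOut
end

section
/- Deterministic bound on the expected number of cuts of size r: fix 0<μ<1, n ≥ 2, 2 ≤ K_n < n, and 1 ≤ r ≤ ⌊n/2⌋. In H(n;μ,K_n), letting E_{n,r}(μ,K_n) denote the event that {v_1,…,v_r} is a cut, it holds that C(n,r) · P[E_{n,r}(μ,K_n)] ≤ ( μ + (1−μ)·(1 − r/n)^{K_n−1} )^{n}. -/
/-! `{v_1, …, v_r}` is a cut exactly when every node selects only nodes on its own side. Nodes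
choose independently, so the probability factorises as `A ^ r * B ^ (n - r)`, where `A` and `B`
are the probabilities that a single node of the small resp. large side selects only on its side.
With `x = r / n`, the estimate `C(m - 1, k) / C(n - 1, k) ≤ (m / n) ^ k` and `x ≤ 1 - x` give
`A ≤ x q` and `B ≤ (1 - x) q` for `q = μ + (1 - μ) (1 - x) ^ (K - 1)`; finally
`C(n, r) x ^ r (1 - x) ^ (n - r) ≤ 1`, being one term of the expansion of `(x + (1 - x)) ^ n`. -/

open Finset Filter Asymptotics

theorem Nat.choose_pred_mul_pow_le {a n : ℕ} (k : ℕ) (h : a ≤ n) :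
    (a - 1).choose k * n ^ k ≤ (n - 1).choose k * a ^ k := by
  suffices hd : (a - 1).descFactorial k * n ^ k ≤ (n - 1).descFactorial k * a ^ k by
    rw [Nat.descFactorial_eq_factorial_mul_choose, Nat.descFactorial_eq_factorial_mul_choose,
      mul_assoc, mul_assoc] at hd
    exact Nat.le_of_mul_le_mul_left hd k.factorial_pos
  rw [Nat.descFactorial_eq_prod_range, Nat.descFactorial_eq_prod_range, pow_eq_prod_const n,
    pow_eq_prod_const a, ← prod_mul_distrib, ← prod_mul_distrib]
  refine prod_le_prod' fun i _ => ?_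
  -- `(a - 1 - i) n ≤ (n - 1 - i) a` reads `a n - (i + 1) n ≤ a n - (i + 1) a`
  rcases le_or_gt a (i + 1) with hai | hai
  · simp [show a - 1 - i = 0 by omega]
  · rw [show a - 1 - i = a - (i + 1) by omega, show n - 1 - i = n - (i + 1) by omega,
      Nat.sub_mul, Nat.sub_mul, mul_comm n a]
    exact Nat.sub_le_sub_left (Nat.mul_le_mul_left (i + 1) h) (a * n)

theorem choose_pred_div_choose_pred_le {a n : ℕ} (k : ℕ) (h : a ≤ n) (hn : 0 < n) :
    ((a - 1).choose k : ℝ) / (n - 1).choose k ≤ ((a : ℝ) / n) ^ k := by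
  rcases Nat.eq_zero_or_pos ((n - 1).choose k) with h0 | hpos
  · rw [h0, Nat.cast_zero, div_zero]
    positivity
  rw [div_pow, div_le_div_iff₀ (by exact_mod_cast hpos) (by positivity), mul_comm ((a : ℝ) ^ k)]
  exact_mod_cast Nat.choose_pred_mul_pow_le k h

theorem choose_mul_pow_mul_one_sub_pow_le_one {x : ℝ} (h0 : 0 ≤ x) (h1 : x ≤ 1) {n r : ℕ}
    (hr : r ≤ n) : (n.choose r : ℝ) * x ^ r * (1 - x) ^ (n - r) ≤ 1 := by
  have h1' : 0 ≤ 1 - x := sub_nonneg.2 h1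
  calc (n.choose r : ℝ) * x ^ r * (1 - x) ^ (n - r)
      = x ^ r * (1 - x) ^ (n - r) * n.choose r := by ring
    _ ≤ ∑ k ∈ range (n + 1), x ^ k * (1 - x) ^ (n - k) * n.choose k :=
      single_le_sum (f := fun k => x ^ k * (1 - x) ^ (n - k) * n.choose k)
        (fun k _ => by positivity) (mem_range.2 (Nat.lt_succ_of_le hr))
    _ = 1 := by rw [← add_pow, add_sub_cancel, one_pow]

theorem choose_mul_pow_mul_pow_le_pow {A B x q : ℝ} {n r : ℕ} (hr : r ≤ n) (hA0 : 0 ≤ A)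
    (hB0 : 0 ≤ B) (hx0 : 0 ≤ x) (hx1 : x ≤ 1) (hA : A ≤ x * q) (hB : B ≤ (1 - x) * q) :
    (n.choose r : ℝ) * (A ^ r * B ^ (n - r)) ≤ q ^ n := by
  have hq0 : 0 ≤ q := by linarith
  calc (n.choose r : ℝ) * (A ^ r * B ^ (n - r))
      ≤ n.choose r * ((x * q) ^ r * ((1 - x) * q) ^ (n - r)) := by gcongr
    _ = n.choose r * x ^ r * (1 - x) ^ (n - r) * q ^ n := by
        rw [mul_pow, mul_pow, ← pow_mul_pow_sub q hr]
        ring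
    _ ≤ 1 * q ^ n := by
        gcongr
        exact choose_mul_pow_mul_one_sub_pow_le_one hx0 hx1 hr
    _ = q ^ n := one_mul _

theorem Fintype.sum_prod_pi_prod_eq_prod_sum {ι α β R : Type*} [Fintype ι] [DecidableEq ι]
    [Fintype α] [Fintype β] [CommSemiring R] (f : ι → α → β → R) :
    ∑ ω : (ι → α) × (ι → β), ∏ i, f i (ω.1 i) (ω.2 i) = ∏ i, ∑ a, ∑ b, f i a b := by
  rw [Fintype.sum_prod_type, Fintype.prod_sum]
  exact sum_congr _ _ fun a => (prod_sum fun i b => f i (a i) b).symm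

namespace KOut

/-- The factor of node `i` in `density`, for type `b` and selection set `s`. -/
noncomputable def nodeWeight (n : ℕ) (μ : ℝ) (K : ℕ) (i : Fin n) (b : Bool)
    (s : Finset (Fin n)) : ℝ :=
  (if b then μ else 1 - μ) *
    (if i ∉ s ∧ s.card = (if b then 1 else K)
     then ((n - 1).choose (if b then 1 else K) : ℝ)⁻¹ else 0)

/-- The probability that a node selects only among `m` given nodes other than itself. -/
noncomputable def probSelectWithin (n : ℕ) (μ : ℝ) (K m : ℕ) : ℝ :=
  μ * ((m.choose 1 : ℝ) / (n - 1).choose 1) + (1 - μ) * ((m.choose K : ℝ) / (n - 1).choose K)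

variable {n : ℕ} {μ : ℝ} {K : ℕ}

theorem sum_ite_subset_ite_notMem_card (i : Fin n) (T : Finset (Fin n)) (k : ℕ) (c : ℝ) :
    ∑ s : Finset (Fin n), (if s ⊆ T then (if i ∉ s ∧ s.card = k then c else 0) else 0) =
      ((T.erase i).card.choose k : ℝ) * c := by
  have hmem (s : Finset (Fin n)) :
      s ∈ powersetCard k (T.erase i) ↔ s ⊆ T ∧ i ∉ s ∧ s.card = k := by
    rw [mem_powersetCard, subset_erase, and_assoc]
  simp_rw [← ite_and, ← hmem, sum_ite_mem, univ_inter, sum_const, card_powersetCard, nsmul_eq_mul]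

theorem sum_nodeWeight_subset (i : Fin n) (T : Finset (Fin n)) :
    ∑ b, ∑ s, (if s ⊆ T then nodeWeight n μ K i b s else 0) =
      probSelectWithin n μ K (T.erase i).card := by
  simp_rw [Fintype.sum_bool, nodeWeight, ← mul_ite_zero, ← mul_sum, sum_ite_subset_ite_notMem_card,
    probSelectWithin, div_eq_mul_inv]
  simp

theorem prob_forall_subset (T : Fin n → Finset (Fin n)) :
    prob n μ K {ω | ∀ i, ω.2 i ⊆ T i} = ∏ i, probSelectWithin n μ K ((T i).erase i).card := by
  have hind : ∀ ω : Config n, Set.indicator {ω | ∀ i, ω.2 i ⊆ T i} (density n μ K) ω =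
      ∏ i, if ω.2 i ⊆ T i then nodeWeight n μ K i (ω.1 i) (ω.2 i) else 0 := by
    intro ω
    rw [Fintype.prod_ite_zero]
    by_cases h : ω ∈ {ω : Config n | ∀ i, ω.2 i ⊆ T i}
    · rw [Set.indicator_of_mem h, if_pos (Set.mem_ofPred.1 h)]
      rfl
    · rw [Set.indicator_of_notMem h, if_neg (mt Set.mem_ofPred.2 h)]
  rw [prob, Fintype.sum_congr _ _ hind,
    Fintype.sum_prod_pi_prod_eq_prod_sum fun i b s => if s ⊆ T i then nodeWeight n μ K i b s else 0]
  exact Fintype.prod_congr _ _ fun i => sum_nodeWeight_subset i (T i)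

theorem setOf_isCut_eq (p : Fin n → Prop) [DecidablePred p] :
    {ω : Config n | ∀ i, p i → ∀ j, ¬ p j → ¬ (graph ω).Adj i j} =
      {ω | ∀ i, ω.2 i ⊆ univ.filter fun j => p j ↔ p i} := by
  ext ω
  simp only [Set.mem_ofPred_eq, subset_iff, mem_filter, mem_univ, true_and]
  constructor
  · intro hcut i j hj
    by_cases hi : p i <;> by_cases hj' : p j <;> simp only [hi, hj']
    · exact (hcut i hi j hj' ⟨fun h => hj' (h ▸ hi), Or.inl hj⟩).elim
    · exact (hcut j hj' i hi ⟨fun h => hi (h ▸ hj'), Or.inr hj⟩).elim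
  · rintro hsub i hi j hj ⟨-, hij | hji⟩
    · exact hj ((hsub i hij).2 hi)
    · exact hj ((hsub j hji).1 hi)

theorem prob_isCut (p : Fin n → Prop) [DecidablePred p] :
    prob n μ K {ω | ∀ i, p i → ∀ j, ¬ p j → ¬ (graph ω).Adj i j} =
      probSelectWithin n μ K (#{i | p i} - 1) ^ #{i | p i} *
        probSelectWithin n μ K (n - #{i | p i} - 1) ^ (n - #{i | p i}) := by
  have hcompl : #{i | ¬ p i} = n - #{i | p i} := by
    rw [filter_not, ← compl_eq_univ_sdiff, card_compl, Fintype.card_fin]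
  rw [setOf_isCut_eq, prob_forall_subset, ← prod_filter_mul_prod_filter_not univ p, ← hcompl]
  congr 1
  · refine prod_eq_pow_card fun i hi => ?_
    have hi : p i := (mem_filter.1 hi).2
    rw [card_erase_of_mem (by simp [hi])]
    simp [hi]
  · refine prod_eq_pow_card fun i hi => ?_
    have hi : ¬ p i := (mem_filter.1 hi).2
    rw [card_erase_of_mem (by simp [hi])]
    simp [hi]

theorem probSelectWithin_nonneg (hμ0 : 0 ≤ μ) (hμ1 : μ ≤ 1) (m : ℕ) :
    0 ≤ probSelectWithin n μ K m := by
  have := sub_nonneg.2 hμ1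
  unfold probSelectWithin
  positivity

theorem probSelectWithin_pred_le (hμ0 : 0 ≤ μ) (hμ1 : μ ≤ 1) (hK : 1 ≤ K) {a : ℕ} (ha : a ≤ n)
    (hn : 0 < n) :
    probSelectWithin n μ K (a - 1) ≤ a / n * (μ + (1 - μ) * ((a : ℝ) / n) ^ (K - 1)) := by
  obtain ⟨k, rfl⟩ : ∃ k, K = k + 1 := ⟨K - 1, by omega⟩
  have h1 := choose_pred_div_choose_pred_le 1 ha hn
  have hk := choose_pred_div_choose_pred_le (k + 1) ha hn
  calc probSelectWithin n μ (k + 1) (a - 1)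
      ≤ μ * ((a : ℝ) / n) ^ 1 + (1 - μ) * ((a : ℝ) / n) ^ (k + 1) := by
        unfold probSelectWithin
        gcongr
    _ = _ := by rw [Nat.add_sub_cancel]; ring

theorem expected_cut_count_bound_general
    (μ : ℝ) (hμ0 : 0 < μ) (hμ1 : μ < 1)
    (n : ℕ) (hn : 2 ≤ n) (K : ℕ) (hK : 2 ≤ K)
    (r : ℕ) (hr2 : r ≤ n / 2) :
    (n.choose r : ℝ) *
        prob n μ K
          {ω | ∀ i : Fin n, (i : ℕ) < r → ∀ j : Fin n, ¬ (j : ℕ) < r → ¬ (graph ω).Adj i j} ≤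
      (μ + (1 - μ) * (1 - (r : ℝ) / (n : ℝ)) ^ (K - 1)) ^ n := by
  have hrn : r ≤ n := hr2.trans (Nat.div_le_self n 2)
  have hn0 : (0 : ℝ) < n := by exact_mod_cast (show 0 < n by omega)
  have hx0 : 0 ≤ (r : ℝ) / n := by positivity
  have hx : (r : ℝ) / n ≤ 1 - r / n := by
    rw [le_sub_iff_add_le, ← two_mul, mul_div_assoc', div_le_one hn0]
    exact_mod_cast (by omega : 2 * r ≤ n)
  have hnr : ((n - r : ℕ) : ℝ) / n = 1 - r / n := by
    rw [Nat.cast_sub hrn, sub_div, div_self hn0.ne']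
  have hμ := sub_nonneg.2 hμ1.le
  rw [prob_isCut, Fin.card_filter_val_lt, min_eq_right hrn]
  refine choose_mul_pow_mul_pow_le_pow hrn (probSelectWithin_nonneg hμ0.le hμ1.le _)
    (probSelectWithin_nonneg hμ0.le hμ1.le _) hx0 (by linarith) ?_ ?_
  · refine (probSelectWithin_pred_le hμ0.le hμ1.le (by omega) hrn (by omega)).trans ?_
    gcongr
  · simpa only [hnr] using
      probSelectWithin_pred_le hμ0.le hμ1.le (by omega) (Nat.sub_le n r) (by omega)

/-- Deterministic bound on the expected number of cuts of size `r`
(for `1 ≤ r ≤ ⌊n/2⌋`): with `E_{n,r}` the event that `{v_1,…,v_r}` is a cut,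
`C(n,r) · P[E_{n,r}] ≤ (μ + (1-μ)(1 - r/n)^(K-1))^n`. -/
theorem expected_cut_count_bound
    (μ : ℝ) (hμ0 : 0 < μ) (hμ1 : μ < 1)
    (n : ℕ) (hn : 2 ≤ n) (K : ℕ) (hK : 2 ≤ K) (hKn : K < n)
    (r : ℕ) (hr1 : 1 ≤ r) (hr2 : r ≤ n / 2) :
    (n.choose r : ℝ) *
        prob n μ K
          {ω | ∀ i : Fin n, (i : ℕ) < r → ∀ j : Fin n, ¬ (j : ℕ) < r → ¬ (graph ω).Adj i j} ≤
      (μ + (1 - μ) * (1 - (r : ℝ) / (n : ℝ)) ^ (K - 1)) ^ n :=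
  expected_cut_count_bound_general μ hμ0 hμ1 n hn K hK r hr2

end KOut
end
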